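/- Let X = (X, τ) be a T₀-space in which the Irr-convergence class 𝓘 is topological, induced by the topology τ_𝓘. Then τ_𝓘 is finer than the irreducibly-derived topology τ_SI (τ_SI ⊆ τ_𝓘). If moreover X is Irr⁺-continuous or SI-continuous, then τ_𝓘 is coarser than the underlying topology (τ_𝓘 ⊆ τ). -/
import Mathlib


universe u v w

open Set

/-- A preordered index type is a (nonempty) directed index set for nets. -/
def IsDirIdx (I : Type v) [Preorder I] : Prop :=
  Nonempty I ∧ ∀ i j : I, ∃ k, i ≤ k ∧ j ≤ k

/-- Convergence of a net with respect to a topology `t` on `X`. -/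
def NetConv {X : Type u} (t : TopologicalSpace X) {I : Type v} [Preorder I]
    (net : I → X) (x : X) : Prop :=
  ∀ U : Set X, t.IsOpen U → x ∈ U → ∃ k, ∀ i, k ≤ i → net i ∈ U

section
variable {X : Type u} [TopologicalSpace X]

/-- The specialisation order: `x ≤ y` iff `x ∈ cl {y}`. -/
def sLE (x y : X) : Prop := x ∈ closure ({y} : Set X)

/-- `b` is an upper bound of `A` in the specialisation order. -/
def IsUB (A : Set X) (b : X) : Prop := ∀ a ∈ A, sLE a b

/-- `s` is the supremum (least upper bound) of `A` in the specialisation order. -/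
def IsSupSpec (A : Set X) (s : X) : Prop := IsUB A s ∧ ∀ b, IsUB A b → sLE s b

/-- The upper set `↑x` in the specialisation order. -/
def upS (x : X) : Set X := {u | sLE x u}

/-- The lower set `↓A` in the specialisation order. -/
def downS (A : Set X) : Set X := {u | ∃ a ∈ A, sLE u a}

/-- The Irr-way-below relation: `x ≪_Irr y` iff every irreducible set `E`
whose supremum exists and dominates `y` meets `↑x`. -/
def wbIrr (x y : X) : Prop :=
  ∀ E : Set X, IsIrreducible E → ∀ s : X, IsSupSpec E s → sLE y s → (E ∩ upS x).Nonempty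

/-- `↡x = {u | u ≪_Irr x}`. -/
def ddIrr (x : X) : Set X := {u | wbIrr u x}

/-- `↟x = {u | x ≪_Irr u}`. -/
def uuIrr (x : X) : Set X := {u | wbIrr x u}

/-- A directed subset (w.r.t. the specialisation order): nonempty and every
pair of elements has an upper bound in the set. -/
def DirectedSub (D : Set X) : Prop :=
  D.Nonempty ∧ ∀ a ∈ D, ∀ b ∈ D, ∃ c ∈ D, sLE a c ∧ sLE b c

/-- `e` is an eventual lower bound of the net `net`. -/
def EvLB {I : Type v} [Preorder I] (net : I → X) (e : X) : Prop :=
  ∃ k, ∀ i, k ≤ i → sLE e (net i)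

/-- Irr-convergence: the net `net` Irr-converges to `y` iff there is an
irreducible set `E` with a supremum `≥ y` consisting of eventual lower
bounds of the net. -/
def IrrConv {I : Type v} [Preorder I] (net : I → X) (y : X) : Prop :=
  ∃ E : Set X, IsIrreducible E ∧ (∃ s, IsSupSpec E s ∧ sLE y s) ∧ ∀ e ∈ E, EvLB net e

end

/-- Sup-sobriety: every closed irreducible set having a supremum is the
closure of the singleton of its supremum. -/
def SupSober (X : Type u) [TopologicalSpace X] : Prop :=
  ∀ F : Set X, IsClosed F → IsIrreducible F → ∀ s : X, IsSupSpec F s → F = closure {s}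

/-- `U` is open in the irreducibly-derived topology `τ_SI`. -/
def SIOpen {X : Type u} [TopologicalSpace X] (U : Set X) : Prop :=
  IsOpen U ∧ ∀ E : Set X, IsIrreducible E → ∀ s : X, IsSupSpec E s → s ∈ U →
    (E ∩ U).Nonempty

/-- Interior with respect to the irreducibly-derived topology. -/
def SIint {X : Type u} [TopologicalSpace X] (A : Set X) : Set X :=
  ⋃₀ {U : Set X | SIOpen U ∧ U ⊆ A}

/-- Irr-continuity: every `↡x` is irreducible with supremum `x`. -/
def IrrCont (X : Type u) [TopologicalSpace X] : Prop :=
  ∀ x : X, IsIrreducible (ddIrr x) ∧ IsSupSpec (ddIrr x) x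

/-- SI⁻-continuity: every `↡x` contains a directed subset with supremum `x`. -/
def SImCont (X : Type u) [TopologicalSpace X] : Prop :=
  ∀ x : X, ∃ D : Set X, D ⊆ ddIrr x ∧ DirectedSub D ∧ IsSupSpec D x

/-- The `*`-property: for every irreducible `F` with a supremum there is a
directed subset of `↓F` with the same supremum. -/
def StarProp (X : Type u) [TopologicalSpace X] : Prop :=
  ∀ F : Set X, IsIrreducible F → ∀ s : X, IsSupSpec F s →
    ∃ D : Set X, D ⊆ downS F ∧ DirectedSub D ∧ IsSupSpec D s

/-- The `⊕`-property: every `↟x` is open. -/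
def OplusProp (X : Type u) [TopologicalSpace X] : Prop :=
  ∀ x : X, IsOpen (uuIrr x)

/-- C-space: for every open `U` and `x ∈ U` there is `y ∈ U` with
`x ∈ int (↑y)`. -/
def CSpace (X : Type u) [TopologicalSpace X] : Prop :=
  ∀ U : Set X, IsOpen U → ∀ x ∈ U, ∃ y ∈ U, x ∈ interior (upS y)

/-- The Irr-convergence class is topological: some topology induces it. -/
def IrrTopological (X : Type u) [TopologicalSpace X] : Prop :=
  ∃ t : TopologicalSpace X, ∀ (I : Type u) [Preorder I], IsDirIdx I →
    ∀ (net : I → X) (y : X), IrrConv net y ↔ NetConv t net y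

/-- The family `τ_𝓘` of sets induced by the Irr-convergence class. -/
def tauI (X : Type u) [TopologicalSpace X] : Set (Set X) :=
  {U | ∀ (I : Type u) [Preorder I], IsDirIdx I → ∀ (net : I → X) (y : X),
      IrrConv net y → y ∈ U → ∃ k, ∀ i, k ≤ i → net i ∈ U}

/-- Kelley's (Iterated limits) axiom for the Irr-convergence class. -/
def IterLimAxiom (X : Type u) [TopologicalSpace X] : Prop :=
  ∀ (I : Type u) [Preorder I], IsDirIdx I →
    ∀ (J : I → Type u) [∀ i, Preorder (J i)], (∀ i, IsDirIdx (J i)) →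
      ∀ (xi : I → X) (xx : ∀ i, J i → X) (x : X),
        IrrConv xi x → (∀ i, IrrConv (xx i) (xi i)) →
        IrrConv (fun p : I × (∀ i, J i) => xx p.1 (p.2 p.1)) x
section Aux

variable {X : Type u} [TopologicalSpace X]

lemma sLE_refl' (x : X) : sLE x x := subset_closure rfl

lemma open_mem_of_sLE {U : Set X} (hU : IsOpen U) {a b : X} (h : sLE a b)
    (ha : a ∈ U) : b ∈ U := by
  rcases mem_closure_iff.mp h U hU ha with ⟨z, hzU, hzb⟩
  rcases hzb with rfl
  exact hzU

lemma wbIrr_le {a b : X} (h : wbIrr a b) : sLE a b := by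
  have hsup : IsSupSpec ({b} : Set X) b := by
    constructor
    · intro y hy
      simp only [Set.mem_singleton_iff] at hy
      subst hy
      exact sLE_refl' _
    · intro c hc; exact hc b rfl
  rcases h {b} isIrreducible_singleton b hsup (sLE_refl' b) with ⟨u, hu, hau⟩
  rcases hu with rfl
  exact hau

lemma directedSub_irreducible {D : Set X} (hD : DirectedSub D) :
    IsIrreducible D := by
  obtain ⟨hne, hdir⟩ := hD
  refine ⟨hne, fun u v hu hv h1 h2 => ?_⟩
  obtain ⟨d₁, hd₁D, hd₁u⟩ := h1
  obtain ⟨d₂, hd₂D, hd₂v⟩ := h2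
  obtain ⟨c, hcD, hc1, hc2⟩ := hdir d₁ hd₁D d₂ hd₂D
  exact ⟨c, hcD, open_mem_of_sLE hu hc1 hd₁u, open_mem_of_sLE hv hc2 hd₂v⟩

/-- Key lemma: under the ⊕-property, if `E ⊆ ↡x` is irreducible with
supremum `x` and `U ∈ τ_𝓘` contains `x`, then `U` contains an open
neighbourhood of `x`. -/
lemma key_open {X : Type u} [TopologicalSpace X] (hop : OplusProp X)
    {U : Set X} (hU : U ∈ tauI X) {x : X} (hx : x ∈ U) {E : Set X}
    (hE : IsIrreducible E) (hEd : E ⊆ ddIrr x) (hsup : IsSupSpec E x) :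
    ∃ W, W ⊆ U ∧ IsOpen W ∧ x ∈ W := by
  classical
  by_cases hA : ∃ A : Finset X, ↑A ⊆ E ∧ ∀ c, IsUB (↑A) c → c ∈ U
  · obtain ⟨A, hAE, hAU⟩ := hA
    refine ⟨⋂ a ∈ A, uuIrr a, ?_, ?_, ?_⟩
    · intro w hw
      refine hAU w fun a ha => ?_
      have : w ∈ uuIrr a := by
        simpa using (Set.mem_iInter₂.mp hw a ha)
      exact wbIrr_le this
    · exact isOpen_biInter_finset fun a _ => hop a
    · refine Set.mem_iInter₂.mpr fun a ha => ?_
      exact hEd (hAE ha)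
  · push_neg at hA
    -- for every finite `A ⊆ E` there is an upper bound of `A` outside `U`
    have hch : ∀ i : {A : Finset X // ↑A ⊆ E},
        ∃ c, IsUB (↑i.1) c ∧ c ∉ U := fun i => hA i.1 i.2
    choose c hc1 hc2 using hch
    have hdir : IsDirIdx {A : Finset X // ↑A ⊆ E} := by
      constructor
      · exact ⟨⟨∅, by simp⟩⟩
      · intro i j
        refine ⟨⟨i.1 ∪ j.1, ?_⟩, ?_, ?_⟩
        · rw [Finset.coe_union]
          exact Set.union_subset i.2 j.2
        · exact Finset.subset_union_left
        · exact Finset.subset_union_right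
    have hconv : IrrConv c x := by
      refine ⟨E, hE, ⟨x, hsup, sLE_refl' x⟩, fun e he => ?_⟩
      refine ⟨⟨{e}, by simpa using he⟩, fun i hi => ?_⟩
      exact hc1 i e (hi (Finset.mem_singleton_self e))
    obtain ⟨k, hk⟩ := hU _ hdir c x hconv hx
    exact absurd (hk k le_rfl) (hc2 k)

end Aux

/-- if the Irr-convergence class is topological then `τ_𝓘` is
finer than `τ_SI`; under Irr⁺- or SI-continuity it is coarser than `τ`. -/
theorem tauI_between {X : Type u} [TopologicalSpace X] [T0Space X]
    (htop : IrrTopological X) :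
    (∀ U : Set X, SIOpen U → U ∈ tauI X) ∧
      ((IrrCont X ∧ OplusProp X) ∨ (SImCont X ∧ OplusProp X) →
        ∀ U ∈ tauI X, IsOpen U) := by
  constructor
  · -- τ_SI ⊆ τ_𝓘
    rintro U ⟨hUo, hSI⟩ I _ _ net y ⟨E, hE, ⟨s, hs, hys⟩, hLB⟩ hyU
    have hsU : s ∈ U := open_mem_of_sLE hUo hys hyU
    obtain ⟨e, heE, heU⟩ := hSI E hE s hs hsU
    obtain ⟨k, hk⟩ := hLB e heE
    exact ⟨k, fun i hi => open_mem_of_sLE hUo (hk i hi) heU⟩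
  · rintro (⟨hc, hop⟩ | ⟨hc, hop⟩) U hU <;> rw [isOpen_iff_forall_mem_open] <;>
      intro x hx
    · obtain ⟨hirr, hsup⟩ := hc x
      exact key_open hop hU hx hirr (fun a ha => ha) hsup
    · obtain ⟨D, hDsub, hDdir, hDsup⟩ := hc x
      exact key_open hop hU hx (directedSub_irreducible hDdir) hDsub hDsup
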